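/- arXiv:2101.11293 — 6 statements merged into one kernel-verified Lean document; each statement's English description precedes it below -/
import Mathlib

section
/- For every real number r ≥ 1 and all vectors x, y in a real inner product space E, one has ⟪‖x‖^(r-1)·x − ‖y‖^(r-1)·y, x − y⟫ ≥ (1/2)‖x‖^(r-1)‖x − y‖² + (1/2)‖y‖^(r-1)‖x − y‖²; in particular the left-hand side is nonnegative. -/
/-!
Writing `a = ‖x‖^(r-1)` and `b = ‖y‖^(r-1)`, polarization gives the exact identity
`⟪a • x - b • y, x - y⟫ = (a + b)/2 * ‖x - y‖² + (a - b)(‖x‖² - ‖y‖²)/2`.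
For `r ≥ 1` both `a - b` and `‖x‖² - ‖y‖²` have the sign of `‖x‖ - ‖y‖`, so the last term is
nonnegative.
-/

theorem real_inner_smul_sub_smul_sub_eq {E : Type*} [NormedAddCommGroup E] [InnerProductSpace ℝ E]
    (a b : ℝ) (x y : E) :
    inner ℝ (a • x - b • y) (x - y)
      = (a + b) / 2 * ‖x - y‖ ^ 2 + (a - b) * (‖x‖ ^ 2 - ‖y‖ ^ 2) / 2 := by
  rw [norm_sub_sq_real]
  simp only [inner_sub_left, inner_sub_right, real_inner_smul_left, real_inner_self_eq_norm_sq,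
    real_inner_comm y x]
  ring

theorem Real.rpow_sub_rpow_mul_sq_sub_sq_nonneg {s t p : ℝ} (hs : 0 ≤ s) (ht : 0 ≤ t)
    (hp : 0 ≤ p) : 0 ≤ (s ^ p - t ^ p) * (s ^ 2 - t ^ 2) := by
  rcases le_total s t with hst | hts
  · exact mul_nonneg_of_nonpos_of_nonpos
      (sub_nonpos.2 (Real.rpow_le_rpow hs hst hp)) (sub_nonpos.2 (pow_le_pow_left₀ hs hst 2))
  · exact mul_nonneg
      (sub_nonneg.2 (Real.rpow_le_rpow ht hts hp)) (sub_nonneg.2 (pow_le_pow_left₀ ht hts 2))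

/-- Pointwise monotonicity estimate (2.23) for the Forchheimer nonlinearity
`C_r(x) = ‖x‖^(r-1) • x`: for `r ≥ 1`,
`⟪C_r(x) - C_r(y), x - y⟫ ≥ ½‖x‖^(r-1)‖x-y‖² + ½‖y‖^(r-1)‖x-y‖² ≥ 0`. -/
theorem forchheimer_pointwise_monotonicity
    {E : Type*} [NormedAddCommGroup E] [InnerProductSpace ℝ E]
    (r : ℝ) (hr : 1 ≤ r) (x y : E) :
    (1 / 2 : ℝ) * ‖x‖ ^ (r - 1) * ‖x - y‖ ^ 2
        + (1 / 2 : ℝ) * ‖y‖ ^ (r - 1) * ‖x - y‖ ^ 2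
      ≤ (inner ℝ ((‖x‖ ^ (r - 1) : ℝ) • x - (‖y‖ ^ (r - 1) : ℝ) • y) (x - y) : ℝ)
    ∧ (0 : ℝ) ≤ (inner ℝ ((‖x‖ ^ (r - 1) : ℝ) • x - (‖y‖ ^ (r - 1) : ℝ) • y) (x - y) : ℝ) := by
  have hx : 0 ≤ ‖x‖ ^ (r - 1) := Real.rpow_nonneg (norm_nonneg x) _
  have hy : 0 ≤ ‖y‖ ^ (r - 1) := Real.rpow_nonneg (norm_nonneg y) _
  have hcross := Real.rpow_sub_rpow_mul_sq_sub_sq_nonneg (norm_nonneg x) (norm_nonneg y)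
    (sub_nonneg.2 hr)
  rw [real_inner_smul_sub_smul_sub_eq]
  constructor
  · linarith
  · positivity
end

section
/- For every real number r ≥ 1 and all vectors x, y in a real inner product space E, one has ‖ ‖x‖^(r-1)·x − ‖y‖^(r-1)·y ‖ ≤ r · (‖x‖ + ‖y‖)^(r-1) · ‖x − y‖. -/
/-!
Splitting `‖x‖^p x - ‖y‖^p y = ‖x‖^p (x - y) + (‖x‖^p - ‖y‖^p) y` with `p = r - 1` and
`‖y‖ ≤ ‖x‖`, the second term is controlled by the tangent-line (Bernoulli) inequality for the
convex function `t ↦ t^(p+1)` at `‖x‖`, which gives `‖y‖ (‖x‖^p - ‖y‖^p) ≤ p ‖x‖^p (‖x‖ - ‖y‖)`,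
and `‖x‖ - ‖y‖ ≤ ‖x - y‖`. Altogether the difference is at most `(1 + p) ‖x‖^p ‖x - y‖`.
-/

open Real

theorem Real.mul_rpow_sub_rpow_le {a b p : ℝ} (ha : 0 ≤ a) (hb : 0 ≤ b) (hp : 0 ≤ p) :
    b * (a ^ p - b ^ p) ≤ p * a ^ p * (a - b) := by
  rcases ha.eq_or_lt with rfl | ha
  · rcases hp.eq_or_lt with rfl | hp
    · simp
    · rw [zero_rpow hp.ne']
      nlinarith [rpow_nonneg hb p]
  -- Bernoulli's inequality `1 + (p+1) s ≤ (1 + s)^(p+1)` at `s = b/a - 1`, scaled by `a^(p+1)`.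
  have bernoulli := one_add_mul_self_le_rpow_one_add
    (by linarith [div_nonneg hb ha.le] : (-1 : ℝ) ≤ b / a - 1) (by linarith : (1 : ℝ) ≤ p + 1)
  rw [add_sub_cancel, div_rpow hb ha.le, le_div_iff₀ (rpow_pos_of_pos ha _),
    rpow_add_one ha.ne', rpow_add_one' hb (by linarith)] at bernoulli
  have : (1 + (p + 1) * (b / a - 1)) * (a ^ p * a) = a ^ p * a + (p + 1) * a ^ p * (b - a) := by
    field_simp
  nlinarith

theorem norm_rpow_smul_sub_rpow_smul_le {E : Type*} [SeminormedAddCommGroup E] [NormedSpace ℝ E]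
    {p : ℝ} (hp : 0 ≤ p) {x y : E} (hyx : ‖y‖ ≤ ‖x‖) :
    ‖‖x‖ ^ p • x - ‖y‖ ^ p • y‖ ≤ (1 + p) * ‖x‖ ^ p * ‖x - y‖ := by
  have hpow : ‖y‖ ^ p ≤ ‖x‖ ^ p := rpow_le_rpow (norm_nonneg y) hyx hp
  have hsplit : ‖x‖ ^ p • x - ‖y‖ ^ p • y = ‖x‖ ^ p • (x - y) + (‖x‖ ^ p - ‖y‖ ^ p) • y := by
    rw [smul_sub, sub_smul]
    abel
  have htangent : (‖x‖ ^ p - ‖y‖ ^ p) * ‖y‖ ≤ p * ‖x‖ ^ p * ‖x - y‖ := calc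
    (‖x‖ ^ p - ‖y‖ ^ p) * ‖y‖ ≤ p * ‖x‖ ^ p * (‖x‖ - ‖y‖) := by
      rw [mul_comm]
      exact mul_rpow_sub_rpow_le (norm_nonneg x) (norm_nonneg y) hp
    _ ≤ p * ‖x‖ ^ p * ‖x - y‖ := by gcongr; exact norm_sub_norm_le x y
  calc ‖‖x‖ ^ p • x - ‖y‖ ^ p • y‖
      ≤ ‖x‖ ^ p * ‖x - y‖ + (‖x‖ ^ p - ‖y‖ ^ p) * ‖y‖ := by
        rw [hsplit]
        refine (norm_add_le _ _).trans_eq ?_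
        rw [norm_smul, norm_smul, norm_of_nonneg (by positivity),
          norm_of_nonneg (sub_nonneg.mpr hpow)]
    _ ≤ (1 + p) * ‖x‖ ^ p * ‖x - y‖ := by linarith

/-- Pointwise local Lipschitz estimate (2.11)/(2.13) for the Forchheimer nonlinearity
`C_r(x) = ‖x‖^(r-1) • x`: for `r ≥ 1`,
`‖C_r(x) - C_r(y)‖ ≤ r (‖x‖ + ‖y‖)^(r-1) ‖x - y‖`. -/
theorem forchheimer_pointwise_lipschitz
    {E : Type*} [NormedAddCommGroup E] [InnerProductSpace ℝ E]
    (r : ℝ) (hr : 1 ≤ r) (x y : E) :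
    ‖(‖x‖ ^ (r - 1) : ℝ) • x - (‖y‖ ^ (r - 1) : ℝ) • y‖
      ≤ r * (‖x‖ + ‖y‖) ^ (r - 1) * ‖x - y‖ := by
  wlog hyx : ‖y‖ ≤ ‖x‖ generalizing x y
  · simpa only [norm_sub_rev, add_comm ‖y‖] using this y x (le_of_not_ge hyx)
  have hp : 0 ≤ r - 1 := sub_nonneg.mpr hr
  calc ‖‖x‖ ^ (r - 1) • x - ‖y‖ ^ (r - 1) • y‖
      ≤ (1 + (r - 1)) * ‖x‖ ^ (r - 1) * ‖x - y‖ := norm_rpow_smul_sub_rpow_smul_le hp hyx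
    _ ≤ r * (‖x‖ + ‖y‖) ^ (r - 1) * ‖x - y‖ := by
      rw [add_sub_cancel]
      gcongr
      exact le_add_of_nonneg_right (norm_nonneg y)
end

section
/- For all vectors x, y in a real inner product space E with y ≠ 0, one has ‖ ‖x‖·x − ‖y‖·y − ‖y‖·(x − y) − (⟪y, x − y⟫/‖y‖)·y ‖ ≤ 4‖x − y‖². -/
/-!
Splitting `x - y` along `y`, the remainder equals `(‖x‖ - ‖y‖) • (x - y)` plus the multiple
`‖x‖ * ‖y‖ - ⟪x, y⟫` of the unit vector `‖y‖⁻¹ • y`. The first term is at most `‖x - y‖²` by the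
reverse triangle inequality, and the second at most `‖x - y‖² / 2`, because twice the
Cauchy–Schwarz defect `‖x‖ * ‖y‖ - ⟪x, y⟫` is `‖x - y‖² - (‖x‖ - ‖y‖)²`.
-/

open RealInnerProductSpace

section InnerProductSpace

variable {E : Type*} [NormedAddCommGroup E] [InnerProductSpace ℝ E]

theorem two_mul_norm_mul_norm_sub_inner (x y : E) :
    2 * (‖x‖ * ‖y‖ - ⟪x, y⟫) = ‖x - y‖ ^ 2 - (‖x‖ - ‖y‖) ^ 2 := by
  rw [norm_sub_sq_real]
  ring

theorem norm_mul_norm_sub_inner_le (x y : E) :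
    ‖x‖ * ‖y‖ - ⟪x, y⟫ ≤ ‖x - y‖ ^ 2 / 2 := by
  nlinarith [two_mul_norm_mul_norm_sub_inner x y, sq_nonneg (‖x‖ - ‖y‖)]

theorem forchheimer_remainder_eq (x : E) {y : E} (hy : y ≠ 0) :
    ‖x‖ • x - ‖y‖ • y - ‖y‖ • (x - y) - (⟪y, x - y⟫ / ‖y‖) • y
      = (‖x‖ - ‖y‖) • (x - y) + (‖x‖ * ‖y‖ - ⟪x, y⟫) • (‖y‖⁻¹ • y) := by
  have hy' : ‖y‖ ≠ 0 := norm_ne_zero_iff.mpr hy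
  rw [inner_sub_right, real_inner_self_eq_norm_sq, real_inner_comm]
  match_scalars
  · ring
  · field_simp
    ring

theorem norm_forchheimer_remainder_le (x : E) {y : E} (hy : y ≠ 0) :
    ‖‖x‖ • x - ‖y‖ • y - ‖y‖ • (x - y) - (⟪y, x - y⟫ / ‖y‖) • y‖ ≤ 3 / 2 * ‖x - y‖ ^ 2 := by
  have h_radial : ‖(‖x‖ - ‖y‖) • (x - y)‖ ≤ ‖x - y‖ ^ 2 := by
    rw [norm_smul, Real.norm_eq_abs, sq]
    exact mul_le_mul_of_nonneg_right (abs_norm_sub_norm_le x y) (norm_nonneg _)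
  have h_angular : ‖(‖x‖ * ‖y‖ - ⟪x, y⟫) • (‖y‖⁻¹ • y)‖ ≤ ‖x - y‖ ^ 2 / 2 := by
    rw [norm_smul, norm_smul, norm_inv, norm_norm, inv_mul_cancel₀ (norm_ne_zero_iff.mpr hy),
      mul_one, Real.norm_eq_abs, abs_of_nonneg (sub_nonneg.mpr (real_inner_le_norm x y))]
    exact norm_mul_norm_sub_inner_le x y
  rw [forchheimer_remainder_eq x hy]
  linarith [norm_add_le ((‖x‖ - ‖y‖) • (x - y)) ((‖x‖ * ‖y‖ - ⟪x, y⟫) • (‖y‖⁻¹ • y))]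

end InnerProductSpace

/-- Pointwise Taylor remainder bound (estimate (3a30)) for the Forchheimer
nonlinearity `C₂(z) = ‖z‖ • z` with absorption exponent `r = 2`: for `y ≠ 0`,
`‖C₂(x) - C₂(y) - C₂′(y)(x - y)‖ ≤ 4‖x - y‖²`. -/
theorem forchheimer_quadratic_taylor_remainder
    {E : Type*} [NormedAddCommGroup E] [InnerProductSpace ℝ E]
    (x y : E) (hy : y ≠ 0) :
    ‖‖x‖ • x - ‖y‖ • y - ‖y‖ • (x - y) - ((inner ℝ y (x - y) : ℝ) / ‖y‖) • y‖
      ≤ 4 * ‖x - y‖ ^ 2 := by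
  linarith [norm_forchheimer_remainder_le x hy, sq_nonneg ‖x - y‖]
end

section
/- For all vectors x, y in a real inner product space E, one has ‖ ‖x‖²·x − ‖y‖²·y − ‖y‖²·(x − y) − 2⟪y, x − y⟫·y ‖ ≤ 3·(‖x‖ + ‖y‖)·‖x − y‖². -/
/-! Writing `h = x - y`, the expansion `‖x‖² = ‖y‖² + 2⟪y, h⟫ + ‖h‖²` turns the remainder into
`2⟪y, h⟫ • h + ‖h‖² • x`, which is quadratic in `h`; Cauchy–Schwarz bounds its norm by
`(2‖y‖ + ‖x‖)‖h‖²`. -/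

section

variable {E : Type*} [NormedAddCommGroup E] [InnerProductSpace ℝ E]

lemma norm_sq_smul_taylor_remainder_eq (x y : E) :
    (‖x‖ ^ 2 : ℝ) • x - (‖y‖ ^ 2 : ℝ) • y - (‖y‖ ^ 2 : ℝ) • (x - y)
        - (2 * inner ℝ y (x - y)) • y
      = (2 * inner ℝ y (x - y)) • (x - y) + (‖x - y‖ ^ 2 : ℝ) • x := by
  have hx : ‖x‖ ^ 2 = ‖y‖ ^ 2 + 2 * inner ℝ y (x - y) + ‖x - y‖ ^ 2 := by
    simpa using norm_add_sq_real y (x - y)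
  rw [hx]
  module

lemma norm_inner_smul_self_le (y h : E) : ‖inner ℝ y h • h‖ ≤ ‖y‖ * ‖h‖ ^ 2 := by
  rw [norm_smul, Real.norm_eq_abs, sq, ← mul_assoc]
  gcongr
  exact abs_real_inner_le_norm y h

lemma norm_inner_smul_add_norm_sq_smul_le (x y h : E) :
    ‖(2 * inner ℝ y h) • h + (‖h‖ ^ 2 : ℝ) • x‖ ≤ (2 * ‖y‖ + ‖x‖) * ‖h‖ ^ 2 := by
  calc ‖(2 * inner ℝ y h) • h + (‖h‖ ^ 2 : ℝ) • x‖
      ≤ 2 * ‖inner ℝ y h • h‖ + ‖h‖ ^ 2 * ‖x‖ := by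
        grw [norm_add_le, mul_smul, norm_smul, Real.norm_two,
          norm_smul_of_nonneg (sq_nonneg _)]
    _ ≤ 2 * (‖y‖ * ‖h‖ ^ 2) + ‖h‖ ^ 2 * ‖x‖ := by grw [norm_inner_smul_self_le]
    _ = (2 * ‖y‖ + ‖x‖) * ‖h‖ ^ 2 := by ring

end

/-- Pointwise Taylor remainder bound (estimate (3b30)) for the cubic Forchheimer
nonlinearity `C₃(z) = ‖z‖² • z` (absorption exponent `r = 3`):
`‖C₃(x) - C₃(y) - C₃′(y)(x - y)‖ ≤ 3(‖x‖ + ‖y‖)‖x - y‖²`. -/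
theorem forchheimer_cubic_taylor_remainder
    {E : Type*} [NormedAddCommGroup E] [InnerProductSpace ℝ E] (x y : E) :
    ‖(‖x‖ ^ 2 : ℝ) • x - (‖y‖ ^ 2 : ℝ) • y - (‖y‖ ^ 2 : ℝ) • (x - y)
        - (2 * (inner ℝ y (x - y) : ℝ)) • y‖
      ≤ 3 * (‖x‖ + ‖y‖) * ‖x - y‖ ^ 2 := by
  rw [norm_sq_smul_taylor_remainder_eq]
  calc _ ≤ (2 * ‖y‖ + ‖x‖) * ‖x - y‖ ^ 2 := norm_inner_smul_add_norm_sq_smul_le x y (x - y)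
    _ ≤ 3 * (‖x‖ + ‖y‖) * ‖x - y‖ ^ 2 := by
      gcongr
      linarith [norm_nonneg x, norm_nonneg y]
end

section
/- For all vectors x, y, p in a real inner product space E with x ≠ 0 and y ≠ 0, one has ‖ (‖x‖·p + (⟪x, p⟫/‖x‖)·x) − (‖y‖·p + (⟪y, p⟫/‖y‖)·y) ‖ ≤ 4‖x − y‖·‖p‖. -/
/-! With `u = ‖x‖⁻¹ • x` and `v = ‖y‖⁻¹ • y`, the difference splits as
`(‖x‖ - ‖y‖) • p + ⟪u, p⟫ • (x - y) + ⟪u - v, p⟫ • y`. The first two terms are bounded by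
`‖x - y‖ ‖p‖` each, and the third by `2 ‖x - y‖ ‖p‖` because `‖y‖ ‖u - v‖ = ‖‖y‖ • u - y‖` is at
most `|‖y‖ - ‖x‖| + ‖x - y‖`. -/

section NormedSpace

variable {F : Type*} [NormedAddCommGroup F] [NormedSpace ℝ F]

theorem norm_smul_inv_norm_smul (x : F) : ‖x‖ • ‖x‖⁻¹ • x = x := by
  rcases eq_or_ne x 0 with rfl | hx
  · simp
  · rw [smul_smul, mul_inv_cancel₀ (norm_ne_zero_iff.mpr hx), one_smul]

theorem norm_inv_norm_smul_le_one (x : F) : ‖‖x‖⁻¹ • x‖ ≤ 1 := by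
  rcases eq_or_ne x 0 with rfl | hx
  · simp
  · exact (norm_smul_inv_norm hx).le

theorem norm_mul_norm_inv_norm_smul_sub_le (x y : F) :
    ‖y‖ * ‖‖x‖⁻¹ • x - ‖y‖⁻¹ • y‖ ≤ 2 * ‖x - y‖ := by
  set u := ‖x‖⁻¹ • x
  calc ‖y‖ * ‖u - ‖y‖⁻¹ • y‖ = ‖(‖y‖ - ‖x‖) • u + (x - y)‖ := by
        rw [← norm_smul_of_nonneg (norm_nonneg y), smul_sub, norm_smul_inv_norm_smul, sub_smul,
          norm_smul_inv_norm_smul]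
        congr 1; abel
    _ ≤ |‖y‖ - ‖x‖| * ‖u‖ + ‖x - y‖ := by
        grw [norm_add_le, norm_smul, Real.norm_eq_abs]
    _ ≤ ‖x - y‖ * 1 + ‖x - y‖ := by
        grw [abs_norm_sub_norm_le y x, norm_sub_rev y x, norm_inv_norm_smul_le_one x]
    _ = 2 * ‖x - y‖ := by ring

end NormedSpace

section InnerProductSpace

variable {E : Type*} [NormedAddCommGroup E] [InnerProductSpace ℝ E]

theorem norm_inner_smul_le (a b z : E) : ‖inner ℝ a b • z‖ ≤ ‖a‖ * ‖b‖ * ‖z‖ := by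
  grw [norm_smul, norm_inner_le_norm]

end InnerProductSpace

theorem forchheimer_quadratic_derivative_lipschitz_general
    {E : Type*} [NormedAddCommGroup E] [InnerProductSpace ℝ E]
    (x y p : E) :
    ‖(‖x‖ • p + ((inner ℝ x p : ℝ) / ‖x‖) • x)
        - (‖y‖ • p + ((inner ℝ y p : ℝ) / ‖y‖) • y)‖
      ≤ 4 * ‖x - y‖ * ‖p‖ := by
  set u := ‖x‖⁻¹ • x
  set v := ‖y‖⁻¹ • y
  have hdecomp : (‖x‖ • p + (inner ℝ x p / ‖x‖) • x) - (‖y‖ • p + (inner ℝ y p / ‖y‖) • y)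
      = (‖x‖ - ‖y‖) • p + inner ℝ u p • (x - y) + inner ℝ (u - v) p • y := by
    simp only [u, v, inner_sub_left, real_inner_smul_left, sub_smul, smul_sub, div_eq_inv_mul]
    abel
  have hv : ‖inner ℝ (u - v) p • y‖ ≤ 2 * ‖x - y‖ * ‖p‖ := by
    grw [norm_inner_smul_le, mul_right_comm, mul_comm ‖u - v‖,
      norm_mul_norm_inv_norm_smul_sub_le]
  calc _ = ‖(‖x‖ - ‖y‖) • p + inner ℝ u p • (x - y) + inner ℝ (u - v) p • y‖ := by
        rw [hdecomp]
    _ ≤ ‖(‖x‖ - ‖y‖) • p‖ + ‖inner ℝ u p • (x - y)‖ + ‖inner ℝ (u - v) p • y‖ :=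
        norm_add₃_le
    _ ≤ ‖x - y‖ * ‖p‖ + 1 * ‖p‖ * ‖x - y‖ + 2 * ‖x - y‖ * ‖p‖ := by
        grw [norm_smul, Real.norm_eq_abs, abs_norm_sub_norm_le, norm_inner_smul_le,
          norm_inv_norm_smul_le_one, hv]
    _ = 4 * ‖x - y‖ * ‖p‖ := by ring

/-- Pointwise Lipschitz estimate in the base point (bound (3a47)) for the Gateaux
derivative of the Forchheimer nonlinearity `C₂(z) = ‖z‖ • z` (`r = 2`):
for `x ≠ 0` and `y ≠ 0`, `‖C₂′(x)p - C₂′(y)p‖ ≤ 4‖x - y‖‖p‖`. -/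
theorem forchheimer_quadratic_derivative_lipschitz
    {E : Type*} [NormedAddCommGroup E] [InnerProductSpace ℝ E]
    (x y p : E) (hx : x ≠ 0) (hy : y ≠ 0) :
    ‖(‖x‖ • p + ((inner ℝ x p : ℝ) / ‖x‖) • x)
        - (‖y‖ • p + ((inner ℝ y p : ℝ) / ‖y‖) • y)‖
      ≤ 4 * ‖x - y‖ * ‖p‖ :=
  forchheimer_quadratic_derivative_lipschitz_general x y p
end

section
/- Let (X, μ) be a measure space, E a real inner product space, and r ≥ 1 a real number. If f, g : X → E are measurable with ‖f‖_{L^{r+1}(μ)} < ∞ and ‖g‖_{L^{r+1}(μ)} < ∞, then ∫_X ⟪‖f(x)‖^(r-1)·f(x) − ‖g(x)‖^(r-1)·g(x), f(x) − g(x)⟫ dμ(x) ≥ (1/2)∫_X ‖f(x)‖^(r-1)‖f(x) − g(x)‖² dμ(x) + (1/2)∫_X ‖g(x)‖^(r-1)‖f(x) − g(x)‖² dμ(x), all three integrals being finite and nonnegative. -/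
/-!
Write `⟪α • a - β • b, a - b⟫ = (α + β)/2 ‖a - b‖² + (α - β)(‖a‖² - ‖b‖²)/2`. For `α = ‖a‖^(r-1)`,
`β = ‖b‖^(r-1)` the last term is nonnegative because `t ↦ t^(r-1)` and `t ↦ t²` are both monotone
on `[0, ∞)`. This gives the estimate pointwise, and it survives integration. Integrability holds because all
three integrands are bounded in absolute value by `(‖f‖ + ‖g‖)^(r+1)`, which is integrable since
`f` and `g` lie in `L^{r+1}`.
-/

open MeasureTheory

lemma real_inner_smul_sub_smul_sub {E : Type*} [NormedAddCommGroup E] [InnerProductSpace ℝ E]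
    (α β : ℝ) (a b : E) :
    inner ℝ (α • a - β • b) (a - b)
      = (α + β) / 2 * ‖a - b‖ ^ 2 + (α - β) * (‖a‖ ^ 2 - ‖b‖ ^ 2) / 2 := by
  rw [norm_sub_sq_real]
  simp only [inner_sub_left, inner_sub_right, real_inner_smul_left,
    real_inner_self_eq_norm_sq, real_inner_comm a b]
  ring

lemma half_rpow_mul_norm_sub_sq_add_le_inner {E : Type*} [NormedAddCommGroup E]
    [InnerProductSpace ℝ E] {s : ℝ} (hs : 0 ≤ s) (a b : E) :
    (1 / 2 : ℝ) * (‖a‖ ^ s * ‖a - b‖ ^ 2) + (1 / 2 : ℝ) * (‖b‖ ^ s * ‖a - b‖ ^ 2)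
      ≤ inner ℝ (‖a‖ ^ s • a - ‖b‖ ^ s • b) (a - b) := by
  have hsimilar : 0 ≤ (‖a‖ ^ s - ‖b‖ ^ s) * (‖a‖ ^ 2 - ‖b‖ ^ 2) := by
    rcases le_total ‖a‖ ‖b‖ with h | h
    · exact mul_nonneg_of_nonpos_of_nonpos
        (sub_nonpos.2 (Real.rpow_le_rpow (norm_nonneg a) h hs))
        (sub_nonpos.2 (pow_le_pow_left₀ (norm_nonneg a) h 2))
    · exact mul_nonneg (sub_nonneg.2 (Real.rpow_le_rpow (norm_nonneg b) h hs))
        (sub_nonneg.2 (pow_le_pow_left₀ (norm_nonneg b) h 2))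
  rw [real_inner_smul_sub_smul_sub]
  linarith

lemma Real.rpow_add_two {s x : ℝ} (hs : 0 ≤ s) (hx : 0 ≤ x) : x ^ (s + 2) = x ^ s * x ^ 2 := by
  rw [show s + 2 = s + (2 : ℕ) by norm_num, Real.rpow_add_natCast' hx (by positivity)]

lemma rpow_mul_norm_sub_sq_le {E : Type*} [SeminormedAddCommGroup E] {s : ℝ} (hs : 0 ≤ s)
    {c : ℝ} (hc : 0 ≤ c) (a b : E) (hcab : c ≤ ‖a‖ + ‖b‖) :
    c ^ s * ‖a - b‖ ^ 2 ≤ (‖a‖ + ‖b‖) ^ (s + 2) := by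
  rw [Real.rpow_add_two hs (by positivity)]
  gcongr
  exact norm_sub_le a b

lemma norm_rpow_norm_smul_self {E : Type*} [SeminormedAddCommGroup E] [NormedSpace ℝ E]
    (s : ℝ) (a : E) : ‖‖a‖ ^ s • a‖ = ‖a‖ ^ s * ‖a‖ := by
  rw [norm_smul, Real.norm_of_nonneg (by positivity)]

lemma abs_inner_rpow_smul_sub_le {E : Type*} [NormedAddCommGroup E] [InnerProductSpace ℝ E]
    {s : ℝ} (hs : 0 ≤ s) (a b : E) :
    |inner ℝ (‖a‖ ^ s • a - ‖b‖ ^ s • b) (a - b)| ≤ (‖a‖ + ‖b‖) ^ (s + 2) := by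
  calc |inner ℝ (‖a‖ ^ s • a - ‖b‖ ^ s • b) (a - b)|
      ≤ ‖‖a‖ ^ s • a - ‖b‖ ^ s • b‖ * ‖a - b‖ := abs_real_inner_le_norm _ _
    _ ≤ (‖a‖ ^ s * ‖a‖ + ‖b‖ ^ s * ‖b‖) * (‖a‖ + ‖b‖) := by
      rw [← norm_rpow_norm_smul_self, ← norm_rpow_norm_smul_self]
      gcongr <;> exact norm_sub_le _ _
    _ ≤ ((‖a‖ + ‖b‖) ^ s * ‖a‖ + (‖a‖ + ‖b‖) ^ s * ‖b‖) * (‖a‖ + ‖b‖) := by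
      gcongr <;> simp
    _ = (‖a‖ + ‖b‖) ^ (s + 2) := by
      rw [Real.rpow_add_two hs (by positivity)]
      ring

lemma MeasureTheory.MemLp.integrable_norm_add_norm_rpow {X E F : Type*} [MeasurableSpace X]
    {μ : Measure X} [NormedAddCommGroup E] [NormedAddCommGroup F] {f : X → E} {g : X → F}
    {p : ℝ} (hp : 0 < p) (hf : MemLp f (ENNReal.ofReal p) μ) (hg : MemLp g (ENNReal.ofReal p) μ) :
    Integrable (fun x => (‖f x‖ + ‖g x‖) ^ p) μ := by
  have := (hf.norm.add hg.norm).integrable_norm_rpow (by simpa using hp) ENNReal.ofReal_ne_top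
  simpa [ENNReal.toReal_ofReal hp.le, abs_of_nonneg, add_nonneg] using this

/-- Integrated monotonicity estimate (2.23) for the Forchheimer nonlinearity
`C_r(u) = ‖u‖^(r-1) • u`: for `r ≥ 1` and `f, g` measurable with finite
`L^{r+1}(μ)` norms, the functions
`x ↦ ⟪C_r(f x) - C_r(g x), f x - g x⟫`, `x ↦ ‖f x‖^(r-1)‖f x - g x‖²` and
`x ↦ ‖g x‖^(r-1)‖f x - g x‖²` are integrable, their integrals are nonnegative,
and `∫ ⟪C_r(f) - C_r(g), f - g⟫ ≥ ½∫‖f‖^(r-1)‖f-g‖² + ½∫‖g‖^(r-1)‖f-g‖²`. -/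
theorem forchheimer_integrated_monotonicity
    {X : Type*} [MeasurableSpace X] (μ : Measure X)
    {E : Type*} [NormedAddCommGroup E] [InnerProductSpace ℝ E]
    (r : ℝ) (hr : 1 ≤ r) (f g : X → E)
    (hf : AEStronglyMeasurable f μ) (hg : AEStronglyMeasurable g μ)
    (hf' : eLpNorm f (ENNReal.ofReal (r + 1)) μ < ⊤)
    (hg' : eLpNorm g (ENNReal.ofReal (r + 1)) μ < ⊤) :
    Integrable (fun x =>
        (inner ℝ ((‖f x‖ ^ (r - 1) : ℝ) • f x - (‖g x‖ ^ (r - 1) : ℝ) • g x)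
          (f x - g x) : ℝ)) μ
    ∧ Integrable (fun x => ‖f x‖ ^ (r - 1) * ‖f x - g x‖ ^ 2) μ
    ∧ Integrable (fun x => ‖g x‖ ^ (r - 1) * ‖f x - g x‖ ^ 2) μ
    ∧ (0 : ℝ) ≤ ∫ x, (inner ℝ ((‖f x‖ ^ (r - 1) : ℝ) • f x - (‖g x‖ ^ (r - 1) : ℝ) • g x)
          (f x - g x) : ℝ) ∂μ
    ∧ (0 : ℝ) ≤ ∫ x, ‖f x‖ ^ (r - 1) * ‖f x - g x‖ ^ 2 ∂μ
    ∧ (0 : ℝ) ≤ ∫ x, ‖g x‖ ^ (r - 1) * ‖f x - g x‖ ^ 2 ∂μ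
    ∧ (1 / 2 : ℝ) * ∫ x, ‖f x‖ ^ (r - 1) * ‖f x - g x‖ ^ 2 ∂μ
        + (1 / 2 : ℝ) * ∫ x, ‖g x‖ ^ (r - 1) * ‖f x - g x‖ ^ 2 ∂μ
      ≤ ∫ x, (inner ℝ ((‖f x‖ ^ (r - 1) : ℝ) • f x - (‖g x‖ ^ (r - 1) : ℝ) • g x)
          (f x - g x) : ℝ) ∂μ := by
  have hs : 0 ≤ r - 1 := by linarith
  have hdom : Integrable (fun x => (‖f x‖ + ‖g x‖) ^ (r - 1 + 2)) μ := by
    rw [show r - 1 + 2 = r + 1 by ring]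
    exact MemLp.integrable_norm_add_norm_rpow (by linarith) ⟨hf, hf'⟩ ⟨hg, hg'⟩
  have hIint : Integrable (fun x =>
      inner ℝ (‖f x‖ ^ (r - 1) • f x - ‖g x‖ ^ (r - 1) • g x) (f x - g x)) μ :=
    hdom.mono' (by fun_prop) (ae_of_all _ fun x => abs_inner_rpow_smul_sub_le hs (f x) (g x))
  have hFint : Integrable (fun x => ‖f x‖ ^ (r - 1) * ‖f x - g x‖ ^ 2) μ :=
    hdom.mono' (by fun_prop) (ae_of_all _ fun x => (Real.norm_of_nonneg (by positivity)).trans_le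
      (rpow_mul_norm_sub_sq_le hs (norm_nonneg _) _ _ (by simp)))
  have hGint : Integrable (fun x => ‖g x‖ ^ (r - 1) * ‖f x - g x‖ ^ 2) μ :=
    hdom.mono' (by fun_prop) (ae_of_all _ fun x => (Real.norm_of_nonneg (by positivity)).trans_le
      (rpow_mul_norm_sub_sq_le hs (norm_nonneg _) _ _ (by simp)))
  have hpointwise := fun x => half_rpow_mul_norm_sub_sq_add_le_inner hs (f x) (g x)
  refine ⟨hIint, hFint, hGint,
    integral_nonneg fun x => (by positivity : (0 : ℝ) ≤ _).trans (hpointwise x),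
    integral_nonneg fun x => by positivity, integral_nonneg fun x => by positivity, ?_⟩
  rw [← integral_const_mul, ← integral_const_mul,
    ← integral_add (hFint.const_mul _) (hGint.const_mul _)]
  exact integral_mono ((hFint.const_mul _).add (hGint.const_mul _)) hIint hpointwise
end
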